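/- (Quaternionic residue formula on an H-circle.) Let I ∈ ℍ be an imaginary unit, p₀ ∈ ℍ, and 0 ≤ R₁ < R₂ ≤ ∞. Let (a_n)_{n∈ℤ} be quaternions lying in the slice ℂ_I such that для every s with R₁ < s < R₂ both series Σ_{n≥0} ‖a_n‖·sⁿ and Σ_{n≥1} ‖a_{−n}‖·s^{−n} converge, and define f(p) = Σ_{n=0}^∞ a_n·(p − p₀)ⁿ + Σ_{n=1}^∞ a_{−n}·(p − p₀)^{−n} on the annulus R₁ < ‖p − p₀‖ < R₂. Then for every r with R₁ < r < R₂, with γ(t) = p₀ + r·exp(t·I) on [0, 2π]: ∫_0^{2π} f(γ(t)) * γ'(t) dt = 2π·I·a_{−1}; that is, the contour integral of f around the H-circle equals 2π·I times the residue of f at p₀ (the coefficient of (p − p₀)^{−1}). -/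

import Mathlib

/-!
The slice `ℂ_I` is an isometric copy of `ℂ`: `Complex.liftAux I` is a norm-preserving real
algebra embedding `ℂ → ℍ`. It carries `circleMap 0 r` onto `γ - p₀`, the derivative of
`circleMap 0 r` onto `γ'`, and the complex Laurent series with the same coefficients onto `f`.
Hence the quaternionic integral is the image of a complex circle integral of a Laurent series,
which may be integrated termwise; of the powers `(z - c) ^ n` only `(z - c)⁻¹` has a nonzero
integral, namely `2πi`.
-/

open scoped Quaternion ComplexConjugate
open Complex Metric Real Topology

noncomputable def laurentSum {A : Type*} [DivisionRing A] [TopologicalSpace A] (α : ℤ → A)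
    (z : A) : A :=
  (∑' n : ℕ, α n * z ^ n) + ∑' n : ℕ, α (-(n : ℤ) - 1) * z⁻¹ ^ (n + 1)

theorem Topology.IsClosedEmbedding.map_laurentSum {A B F : Type*} [DivisionRing A]
    [TopologicalSpace A] [DivisionRing B] [TopologicalSpace B] [T2Space B] [FunLike F A B]
    [RingHomClass F A B] {φ : F} (hφ : IsClosedEmbedding φ) (α : ℤ → A) (z : A) :
    φ (laurentSum α z) = laurentSum (fun n => φ (α n)) (φ z) := by
  simp only [laurentSum, map_add, hφ.map_tsum (f := fun n : ℕ => _), map_mul, map_pow, map_inv₀]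

namespace circleIntegral

theorem hasSum_integral_of_norm_le {ι E : Type*} [Countable ι] [NormedAddCommGroup E]
    [NormedSpace ℂ E] [CompleteSpace E] {f : ι → ℂ → E} {b : ι → ℝ} {c : ℂ} {R : ℝ}
    (hf : ∀ n, ContinuousOn (f n) (sphere c |R|))
    (hfb : ∀ n, ∀ z ∈ sphere c |R|, ‖f n z‖ ≤ b n) (hb : Summable b) :
    HasSum (fun n => ∮ z in C(c, R), f n z) (∮ z in C(c, R), ∑' n, f n z) := by
  refine intervalIntegral.hasSum_integral_of_dominated_convergence (fun n _ => |R| * b n)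
    (fun n => (hf n).circleIntegrable'.out.def'.aestronglyMeasurable) (fun n => ?_)
    (.of_forall fun _ _ => hb.mul_left _) intervalIntegrable_const (.of_forall fun θ _ => ?_)
  · refine .of_forall fun θ _ => ?_
    rw [norm_smul, deriv_circleMap, norm_mul, norm_circleMap_zero, norm_I, mul_one]
    exact mul_le_mul_of_nonneg_left (hfb n _ (circleMap_mem_sphere' c R θ)) (abs_nonneg R)
  · have hsum := hb.of_norm_bounded fun n => hfb n _ (circleMap_mem_sphere' c R θ)
    exact hsum.hasSum.const_smul _

theorem integral_sub_center_pow (c : ℂ) (R : ℝ) (n : ℕ) :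
    ∮ z in C(c, R), (z - c) ^ n = 0 := by
  simpa using integral_sub_zpow_of_ne (n := n) (by omega) c c R

theorem integral_sub_center_inv_pow (c : ℂ) {R : ℝ} (hR : R ≠ 0) (n : ℕ) :
    ∮ z in C(c, R), (z - c)⁻¹ ^ (n + 1) = if n = 0 then 2 * π * I else 0 := by
  split_ifs with hn
  · simp [hn, hR]
  · simpa [← zpow_natCast, ← zpow_neg] using
      integral_sub_zpow_of_ne (n := -(n + 1 : ℕ)) (by omega) c c R

end circleIntegral

theorem circleIntegral_laurentSum {α : ℤ → ℂ} {c : ℂ} {r : ℝ} (hr : 0 < r)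
    (hpos : Summable fun n : ℕ => ‖α n‖ * r ^ n)
    (hneg : Summable fun n : ℕ => ‖α (-(n : ℤ) - 1)‖ * r⁻¹ ^ (n + 1)) :
    ∮ z in C(c, r), laurentSum α (z - c) = 2 * π * I * α (-1) := by
  set F : ℕ → ℂ → ℂ := fun n z =>
    α n * (z - c) ^ n + α (-(n : ℤ) - 1) * (z - c)⁻¹ ^ (n + 1)
  have hsphere : sphere c |r| = sphere c r := by rw [abs_of_pos hr]
  have hnorm_pow : ∀ n : ℕ, ∀ z ∈ sphere c r, ‖α n * (z - c) ^ n‖ = ‖α n‖ * r ^ n := by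
    intro n z hz
    rw [norm_mul, norm_pow, ← dist_eq_norm, mem_sphere.1 hz]
  have hnorm_inv : ∀ n : ℕ, ∀ z ∈ sphere c r,
      ‖α (-(n : ℤ) - 1) * (z - c)⁻¹ ^ (n + 1)‖ = ‖α (-(n : ℤ) - 1)‖ * r⁻¹ ^ (n + 1) := by
    intro n z hz
    rw [norm_mul, norm_pow, norm_inv, ← dist_eq_norm, mem_sphere.1 hz]
  have hne : ∀ z ∈ sphere c r, z - c ≠ 0 := fun z hz =>
    sub_ne_zero.2 (ne_of_mem_sphere hz hr.ne')
  have hcont_pow : ∀ n : ℕ, ContinuousOn (fun z => α n * (z - c) ^ n) (sphere c r) := fun n =>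
    continuousOn_const.mul ((continuousOn_id.sub continuousOn_const).pow n)
  have hcont_inv : ∀ n : ℕ,
      ContinuousOn (fun z => α (-(n : ℤ) - 1) * (z - c)⁻¹ ^ (n + 1)) (sphere c r) := fun n =>
    continuousOn_const.mul (((continuousOn_id.sub continuousOn_const).inv₀ hne).pow _)
  have hlaurent :
      Set.EqOn (fun z => laurentSum α (z - c)) (fun z => ∑' n, F n z) (sphere c r) := by
    intro z hz
    exact (Summable.tsum_add (hpos.of_norm_bounded fun n => (hnorm_pow n z hz).le)
      (hneg.of_norm_bounded fun n => (hnorm_inv n z hz).le)).symm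
  have hF : ∀ n, ∮ z in C(c, r), F n z = if n = 0 then 2 * π * I * α (-1) else 0 := by
    intro n
    rw [circleIntegral.integral_add ((hcont_pow n).circleIntegrable hr.le)
      ((hcont_inv n).circleIntegrable hr.le), circleIntegral.integral_const_mul,
      circleIntegral.integral_const_mul, circleIntegral.integral_sub_center_pow,
      circleIntegral.integral_sub_center_inv_pow c hr.ne']
    split_ifs with hn <;> simp [hn, mul_comm]
  have hF_le : ∀ n, ∀ z ∈ sphere c |r|,
      ‖F n z‖ ≤ ‖α n‖ * r ^ n + ‖α (-(n : ℤ) - 1)‖ * r⁻¹ ^ (n + 1) := by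
    rw [hsphere]
    exact fun n z hz => (norm_add_le _ _).trans (by rw [hnorm_pow n z hz, hnorm_inv n z hz])
  rw [circleIntegral.integral_congr hr.le hlaurent]
  refine (circleIntegral.hasSum_integral_of_norm_le
    (fun n => hsphere ▸ (hcont_pow n).add (hcont_inv n)) hF_le (hpos.add hneg)).unique ?_
  simpa only [hF] using hasSum_ite_eq 0 (2 * π * I * α (-1))

namespace Quaternion

theorem star_eq_neg_of_mul_self_eq_neg_one {I : ℍ[ℝ]} (hI : I * I = -1) : star I = -I := by
  have hnormSq : normSq I = 1 := by
    rw [normSq_eq_norm_mul_self, ← norm_mul, hI, norm_neg, norm_one]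
  have hI0 : I ≠ 0 := by
    rintro rfl
    simp at hnormSq
  apply mul_left_cancel₀ hI0
  rw [self_mul_star, hnormSq, mul_neg, hI, neg_neg, coe_one]

variable {I : ℍ[ℝ]} (hI : I * I = -1)

theorem star_liftAux (w : ℂ) : star (liftAux I hI w) = liftAux I hI (conj w) := by
  simp [liftAux_apply, star_eq_neg_of_mul_self_eq_neg_one hI]

theorem norm_liftAux (w : ℂ) : ‖liftAux I hI w‖ = ‖w‖ := by
  have h : normSq (liftAux I hI w) = Complex.normSq w := by
    apply coe_injective
    rw [← self_mul_star, star_liftAux hI, ← map_mul, mul_conj]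
    simp
  rw [← sq_eq_sq₀ (norm_nonneg _) (norm_nonneg _), sq, ← normSq_eq_norm_mul_self, h,
    Complex.normSq_eq_norm_sq]

noncomputable def sliceIsometry : ℂ →ₗᵢ[ℝ] ℍ[ℝ] :=
  { (liftAux I hI).toLinearMap with norm_map' := norm_liftAux hI }

theorem exp_real_smul_eq_liftAux (t : ℝ) :
    NormedSpace.exp (t • I) = liftAux I hI (Complex.exp (t * Complex.I)) := by
  rw [Complex.exp_eq_exp_ℂ, NormedSpace.map_exp (liftAux I hI) (sliceIsometry hI).continuous,
    ← real_smul, map_smul, liftAux_apply_I]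

theorem liftAux_circleMap (r t : ℝ) :
    liftAux I hI (circleMap 0 r t) = r • NormedSpace.exp (t • I) := by
  rw [exp_real_smul_eq_liftAux hI, circleMap, zero_add, ← map_smul, real_smul]

theorem liftAux_deriv_circleMap (r t : ℝ) :
    liftAux I hI (deriv (circleMap 0 r) t) = r • (I * NormedSpace.exp (t • I)) := by
  rw [deriv_circleMap, mul_comm, map_mul, liftAux_apply_I, liftAux_circleMap, mul_smul_comm]

end Quaternion

theorem quaternion_residue_formula_general
    (I : ℍ[ℝ]) (hI : I * I = -1) (p₀ : ℍ[ℝ])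
    (R₁ : ℝ) (R₂ : ENNReal) (hR₁ : 0 ≤ R₁)
    (a : ℤ → ℍ[ℝ]) (ha : ∀ n : ℤ, ∃ x v : ℝ, a n = (x : ℍ[ℝ]) + v • I)
    (hsumPos : ∀ s : ℝ, R₁ < s → ENNReal.ofReal s < R₂ →
      Summable (fun n : ℕ => ‖a (n : ℤ)‖ * s ^ n))
    (hsumNeg : ∀ s : ℝ, R₁ < s → ENNReal.ofReal s < R₂ →
      Summable (fun n : ℕ => ‖a (-(n : ℤ) - 1)‖ * s⁻¹ ^ (n + 1)))
    (f : ℍ[ℝ] → ℍ[ℝ])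
    (hf : ∀ p : ℍ[ℝ], R₁ < ‖p - p₀‖ → ENNReal.ofReal ‖p - p₀‖ < R₂ →
      f p = (∑' n : ℕ, a (n : ℤ) * (p - p₀) ^ n)
        + ∑' n : ℕ, a (-(n : ℤ) - 1) * ((p - p₀)⁻¹) ^ (n + 1))
    (r : ℝ) (hr₁ : R₁ < r) (hr₂ : ENNReal.ofReal r < R₂)
    (γ γ' : ℝ → ℍ[ℝ])
    (hγ : ∀ t, γ t = p₀ + r • NormedSpace.exp (t • I))
    (hγ' : ∀ t, γ' t = r • (I * NormedSpace.exp (t • I))) :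
    ∫ t in (0:ℝ)..(2 * Real.pi), f (γ t) * γ' t = (2 * Real.pi) • (I * a (-1)) := by
  set φ := liftAux I hI
  have hφ : IsClosedEmbedding φ := (Quaternion.sliceIsometry hI).isometry.isClosedEmbedding
  choose x v hxv using ha
  set α : ℤ → ℂ := fun n => ⟨x n, v n⟩
  have hα : ∀ n, φ (α n) = a n := fun n => by simp [φ, α, liftAux_apply, hxv]
  have hα_norm : ∀ n, ‖α n‖ = ‖a n‖ := fun n => by rw [← hα, Quaternion.norm_liftAux]
  have hr : 0 < r := hR₁.trans_lt hr₁
  have hγ_norm : ∀ t, ‖γ t - p₀‖ = r := fun t => by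
    rw [hγ, add_sub_cancel_left, ← Quaternion.liftAux_circleMap hI, Quaternion.norm_liftAux,
      norm_circleMap_zero, abs_of_pos hr]
  have hintegrand : ∀ t, f (γ t) * γ' t
      = φ (deriv (circleMap 0 r) t • laurentSum α (circleMap 0 r t - 0)) := fun t => by
    have hfγ : f (γ t) = laurentSum a (γ t - p₀) := hf _ (hγ_norm t ▸ hr₁) (hγ_norm t ▸ hr₂)
    rw [hfγ, hγ', hγ, add_sub_cancel_left, sub_zero, ← Quaternion.liftAux_circleMap hI,
      ← Quaternion.liftAux_deriv_circleMap hI, smul_eq_mul, mul_comm, map_mul,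
      hφ.map_laurentSum, funext hα]
  calc ∫ t in (0:ℝ)..(2 * π), f (γ t) * γ' t
      = φ (∮ z in C(0, r), laurentSum α (z - 0)) := by
        simp only [hintegrand, circleIntegral]
        exact (Quaternion.sliceIsometry hI).intervalIntegral_comp_comm _
    _ = φ ((2 * π : ℝ) • (Complex.I * α (-1))) := by
        rw [circleIntegral_laurentSum hr (by simpa only [hα_norm] using hsumPos r hr₁ hr₂)
          (by simpa only [hα_norm] using hsumNeg r hr₁ hr₂), real_smul]
        push_cast
        ring_nf
    _ = (2 * π) • (I * a (-1)) := by rw [map_smul, map_mul, liftAux_apply_I, hα]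

theorem quaternion_residue_formula
    (I : ℍ[ℝ]) (hI : I * I = -1) (p₀ : ℍ[ℝ])
    (R₁ : ℝ) (R₂ : ENNReal) (hR₁ : 0 ≤ R₁) (hR₁₂ : ENNReal.ofReal R₁ < R₂)
    (a : ℤ → ℍ[ℝ]) (ha : ∀ n : ℤ, ∃ x v : ℝ, a n = (x : ℍ[ℝ]) + v • I)
    (hsumPos : ∀ s : ℝ, R₁ < s → ENNReal.ofReal s < R₂ →
      Summable (fun n : ℕ => ‖a (n : ℤ)‖ * s ^ n))
    (hsumNeg : ∀ s : ℝ, R₁ < s → ENNReal.ofReal s < R₂ →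
      Summable (fun n : ℕ => ‖a (-(n : ℤ) - 1)‖ * s⁻¹ ^ (n + 1)))
    (f : ℍ[ℝ] → ℍ[ℝ])
    (hf : ∀ p : ℍ[ℝ], R₁ < ‖p - p₀‖ → ENNReal.ofReal ‖p - p₀‖ < R₂ →
      f p = (∑' n : ℕ, a (n : ℤ) * (p - p₀) ^ n)
        + ∑' n : ℕ, a (-(n : ℤ) - 1) * ((p - p₀)⁻¹) ^ (n + 1))
    (r : ℝ) (hr₁ : R₁ < r) (hr₂ : ENNReal.ofReal r < R₂)
    (γ γ' : ℝ → ℍ[ℝ])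
    (hγ : ∀ t, γ t = p₀ + r • NormedSpace.exp (t • I))
    (hγ' : ∀ t, γ' t = r • (I * NormedSpace.exp (t • I))) :
    ∫ t in (0:ℝ)..(2 * Real.pi), f (γ t) * γ' t = (2 * Real.pi) • (I * a (-1)) :=
  quaternion_residue_formula_general I hI p₀ R₁ R₂ hR₁ a ha hsumPos hsumNeg f hf r hr₁ hr₂ γ γ' hγ
    hγ'
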